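/- p-adic Schwartz kernel theorem (converse direction): for every ℂ-linear map 𝒦 : 𝒮(Y) → 𝒮'(X), there exists a unique distribution u on X × Y such that ⟨u, φ ⊗ ψ⟩ = ⟨𝒦ψ, φ⟩ for all φ ∈ 𝒮(X) and ψ ∈ 𝒮(Y). -/

import Mathlib

open Set 

noncomputable section

/-- A Schwartz–Bruhat function on an open set `X`: a locally constant, compactly
supported `ℂ`-valued function (extended by zero outside `X`). -/
def IsSB {E : Type*} [TopologicalSpace E] (X : Set E) (φ : E → ℂ) : Prop :=
  IsLocallyConstant φ ∧ HasCompactSupport φ ∧ tsupport φ ⊆ X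

theorem IsSB.zero {E : Type*} [TopologicalSpace E] (X : Set E) : IsSB X (0 : E → ℂ) := by
  refine ⟨IsLocallyConstant.const 0, ?_, ?_⟩ <;>
    simp [HasCompactSupport, tsupport, Function.support_zero]

theorem IsSB.add {E : Type*} [TopologicalSpace E] {X : Set E} {f g : E → ℂ}
    (hf : IsSB X f) (hg : IsSB X g) : IsSB X (f + g) :=
  ⟨hf.1.add hg.1, hf.2.1.add hg.2.1, (tsupport_add f g).trans (union_subset hf.2.2 hg.2.2)⟩

theorem IsSB.smul {E : Type*} [TopologicalSpace E] {X : Set E} {f : E → ℂ} (c : ℂ)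
    (hf : IsSB X f) : IsSB X (c • f) := by
  refine ⟨?_, hf.2.1.smul_left, (tsupport_smul_subset_right (fun _ => c) f).trans hf.2.2⟩
  have := (IsLocallyConstant.const (X := E) c).mul hf.1
  simpa [Function.const, smul_eq_mul, Pi.smul_def, Pi.mul_def] using this

/-- The space `𝒮(X)` of Schwartz–Bruhat functions on `X`, as a `ℂ`-submodule of `E → ℂ`. -/
def SB {E : Type*} [TopologicalSpace E] (X : Set E) : Submodule ℂ (E → ℂ) where
  carrier := {φ | IsSB X φ}
  zero_mem' := IsSB.zero X
  add_mem' := IsSB.add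
  smul_mem' := fun c _ h => IsSB.smul c h

theorem IsSB.tensor {E F : Type*} [TopologicalSpace E] [TopologicalSpace F]
    {X : Set E} {Y : Set F} {φ : E → ℂ} {ψ : F → ℂ}
    (hφ : IsSB X φ) (hψ : IsSB Y ψ) : IsSB (X ×ˢ Y) (fun z : E × F => φ z.1 * ψ z.2) := by
  have hsupp : tsupport (fun z : E × F => φ z.1 * ψ z.2) ⊆ tsupport φ ×ˢ tsupport ψ := by
    rw [tsupport, tsupport, tsupport, ← closure_prod_eq]
    refine closure_mono ?_
    intro z hz
    simp only [Function.mem_support, mul_ne_zero_iff] at hz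
    exact (Set.mem_prod.2 ⟨Function.mem_support.2 hz.1, Function.mem_support.2 hz.2⟩)
  refine ⟨(hφ.1.comp_continuous continuous_fst).mul (hψ.1.comp_continuous continuous_snd),
    IsCompact.of_isClosed_subset (hφ.2.1.prod hψ.2.1) (isClosed_tsupport _) hsupp,
    hsupp.trans (Set.prod_mono hφ.2.2 hψ.2.2)⟩

/-- The bilinear map `(φ, ψ) ↦ φ ⊗ ψ`, `(φ ⊗ ψ)(x, y) = φ(x)ψ(y)`,
from `𝒮(X) × 𝒮(Y)` to `𝒮(X × Y)`. -/
def tensorBilin {E F : Type*} [TopologicalSpace E] [TopologicalSpace F]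
    (X : Set E) (Y : Set F) : SB X →ₗ[ℂ] SB Y →ₗ[ℂ] SB (X ×ˢ Y) :=
  LinearMap.mk₂ ℂ
    (fun φ ψ => ⟨fun z : E × F => (φ : E → ℂ) z.1 * (ψ : F → ℂ) z.2,
      IsSB.tensor (show IsSB X (φ : E → ℂ) from φ.2) (show IsSB Y (ψ : F → ℂ) from ψ.2)⟩)
    (fun φ φ' ψ => Subtype.ext (funext fun z => by
      simp only [Submodule.coe_add, Pi.add_apply]; ring))
    (fun c φ ψ => Subtype.ext (funext fun z => by
      simp only [SetLike.val_smul, Pi.smul_apply, smul_eq_mul]; ring))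
    (fun φ ψ ψ' => Subtype.ext (funext fun z => by
      simp only [Submodule.coe_add, Pi.add_apply]; ring))
    (fun c φ ψ => Subtype.ext (funext fun z => by
      simp only [SetLike.val_smul, Pi.smul_apply, smul_eq_mul]; ring))

/-!
The map `φ ⊗ ψ ↦ φ ⊗ ψ` from `𝒮(X) ⊗ 𝒮(Y)` to `𝒮(X × Y)` is a linear isomorphism, so `u` must be
the functional `φ ⊗ ψ ↦ ⟨𝒦ψ, φ⟩` of `𝒮(X) ⊗ 𝒮(Y)` transported along it.

Injectivity holds for any two spaces of functions: expand a tensor as `∑ cᵢ ⊗ bᵢ` along a basis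
`(bᵢ)` of the second factor; if it vanishes at every `(x, y)`, then `∑ cᵢ(x) bᵢ = 0`, so every
`cᵢ(x)` vanishes. Surjectivity uses that `ℚ_p^m` is locally compact and totally disconnected: a
locally constant, compactly supported `f` is constant on each of finitely many compact open boxes
`A × B ⊆ X × Y` covering its support, and since boxes are closed under intersection,
inclusion–exclusion writes `f` as a combination of indicators of boxes `1_A ⊗ 1_B`.
-/

theorem exists_unique_dual_apply_eq_of_bijective_lift {R M N P : Type*} [CommSemiring R]
    [AddCommMonoid M] [AddCommMonoid N] [AddCommMonoid P]
    [Module R M] [Module R N] [Module R P] (B : M →ₗ[R] N →ₗ[R] P)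
    (hB : Function.Bijective (TensorProduct.lift B)) (K : N →ₗ[R] Module.Dual R M) :
    ∃! u : Module.Dual R P, ∀ φ ψ, u (B φ ψ) = K ψ φ := by
  let e := LinearEquiv.ofBijective _ hB
  refine ⟨TensorProduct.lift K.flip ∘ₗ e.symm.toLinearMap, fun φ ψ => ?_, fun v hv => ?_⟩
  · have : e.symm (B φ ψ) = φ ⊗ₜ ψ := e.symm_apply_eq.2 (TensorProduct.lift.tmul φ ψ).symm
    simp [this]
  · rw [LinearEquiv.eq_comp_toLinearMap_symm]
    exact TensorProduct.ext' fun φ ψ => by simpa [e] using hv φ ψ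

theorem AddSubgroup.indicator_biUnion_mem {α G ι : Type*} [AddCommGroup G]
    (M : AddSubgroup (α → G)) (f : α → G) {P : Set α → Prop}
    (hP : ∀ s t, P s → P t → P (s ∩ t)) (hM : ∀ s, P s → s.indicator f ∈ M)
    (I : Finset ι) (A : ι → Set α) (hA : ∀ i ∈ I, P (A i)) :
    (⋃ i ∈ I, A i).indicator f ∈ M := by
  classical
  induction I using Finset.induction_on generalizing A with
  | empty =>
    convert M.zero_mem
    simp [Pi.zero_def]
  | insert a I _ ih =>
    have hinter : A a ∩ ⋃ i ∈ I, A i = ⋃ i ∈ I, A a ∩ A i := Set.inter_iUnion₂ _ _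
    have hunion := Set.indicator_union_add_inter f (A a) (⋃ i ∈ I, A i)
    rw [Finset.set_biUnion_insert, eq_sub_of_add_eq hunion, hinter]
    refine M.sub_mem (M.add_mem (hM _ (hA a (Finset.mem_insert_self a I)))
      (ih A fun i hi => hA i (Finset.mem_insert_of_mem hi)))
      (ih _ fun i hi => hP _ _ (hA a (Finset.mem_insert_self a I))
        (hA i (Finset.mem_insert_of_mem hi)))

section MulTensor

variable {K E F : Type*} [Field K]

def Submodule.mulTensor (V : Submodule K (E → K)) (W : Submodule K (F → K)) :
    V →ₗ[K] W →ₗ[K] (E × F → K) :=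
  (LinearMap.mul K (E × F → K)).compl₁₂ (LinearMap.funLeft K K Prod.fst ∘ₗ V.subtype)
    (LinearMap.funLeft K K Prod.snd ∘ₗ W.subtype)

theorem Submodule.mulTensor_apply (V : Submodule K (E → K)) (W : Submodule K (F → K))
    (φ : V) (ψ : W) (z : E × F) : V.mulTensor W φ ψ z = φ.1 z.1 * ψ.1 z.2 := rfl

theorem Submodule.lift_mulTensor_injective (V : Submodule K (E → K)) (W : Submodule K (F → K)) :
    Function.Injective (TensorProduct.lift (V.mulTensor W)) := by
  classical
  refine (injective_iff_map_eq_zero _).2 fun t ht => ?_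
  let b := Module.Basis.ofVectorSpace K W
  let c := TensorProduct.equivFinsuppOfBasisRight b t
  have ht_eq : t = c.sum fun i φ => φ ⊗ₜ b i := by
    rw [← TensorProduct.equivFinsuppOfBasisRight_symm_apply, LinearEquiv.symm_apply_apply]
  have hval : ∀ x y, (c.sum fun i φ => φ.1 x * (b i).1 y) = 0 := fun x y => by
    have := congrFun ht (x, y)
    rw [ht_eq, map_finsuppSum, Finsupp.sum, Finset.sum_apply] at this
    simpa [Finsupp.sum, Submodule.mulTensor_apply] using this
  suffices hc : c = 0 by rw [ht_eq, hc, Finsupp.sum_zero_index]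
  ext i x
  let d : _ →₀ K := c.mapRange (fun φ => φ.1 x) rfl
  have hd : Finsupp.linearCombination K b d = 0 := by
    rw [Finsupp.linearCombination_apply, Finsupp.sum_mapRange_index fun i => zero_smul K (b i)]
    ext y
    simpa [Finsupp.sum, Finset.sum_apply] using hval x y
  simpa [d] using congrArg (· i) (linearIndependent_iff.1 b.linearIndependent d hd)

end MulTensor

section SchwartzBruhat

variable {E F : Type*} [TopologicalSpace E] [TopologicalSpace F]

theorem exists_isClopen_isCompact_mem_subset [LocallyCompactSpace E] [T2Space E]
    [TotallyDisconnectedSpace E] {U : Set E} (hU : IsOpen U) {x : E} (hx : x ∈ U) :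
    ∃ A : Set E, IsClopen A ∧ IsCompact A ∧ x ∈ A ∧ A ⊆ U := by
  obtain ⟨s, hs, hxs, hsU⟩ := exists_compact_subset hU hx
  obtain ⟨A, hA, hxA, hAs⟩ :=
    loc_compact_Haus_tot_disc_of_zero_dim.mem_nhds_iff.1 (isOpen_interior.mem_nhds hxs)
  have hAs' : A ⊆ s := hAs.trans interior_subset
  exact ⟨A, hA, hs.of_isClosed_subset hA.isClosed hAs', hxA, hAs'.trans hsU⟩

theorem isSB_indicator_one {X A : Set E} (hA : IsClopen A) (hAc : IsCompact A) (hAX : A ⊆ X) :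
    IsSB X (A.indicator 1) := by
  have hsupp : tsupport (A.indicator (1 : E → ℂ)) ⊆ A :=
    closure_minimal Set.support_indicator_subset hA.isClosed
  exact ⟨LocallyConstant.coe_charFn ℂ hA ▸ (LocallyConstant.charFn ℂ hA).isLocallyConstant,
    hAc.of_isClosed_subset (isClosed_tsupport _) hsupp, hsupp.trans hAX⟩

def IsCompactClopenBox (X : Set E) (Y : Set F) (C : Set (E × F)) : Prop :=
  ∃ A B, IsClopen A ∧ IsCompact A ∧ A ⊆ X ∧ IsClopen B ∧ IsCompact B ∧ B ⊆ Y ∧ C = A ×ˢ B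

namespace IsCompactClopenBox

variable {X : Set E} {Y : Set F} {C D : Set (E × F)}

theorem isOpen (hC : IsCompactClopenBox X Y C) : IsOpen C := by
  obtain ⟨A, B, hA, -, -, hB, -, -, rfl⟩ := hC
  exact hA.isOpen.prod hB.isOpen

theorem inter (hC : IsCompactClopenBox X Y C) (hD : IsCompactClopenBox X Y D) :
    IsCompactClopenBox X Y (C ∩ D) := by
  obtain ⟨A, B, hA, hAc, hAX, hB, hBc, hBY, rfl⟩ := hC
  obtain ⟨A', B', hA', -, -, hB', -, -, rfl⟩ := hD
  exact ⟨A ∩ A', B ∩ B', hA.inter hA', hAc.inter_right hA'.isClosed,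
    Set.inter_subset_left.trans hAX, hB.inter hB', hBc.inter_right hB'.isClosed,
    Set.inter_subset_left.trans hBY, Set.prod_inter_prod⟩

theorem indicator_const_mem_range (hC : IsCompactClopenBox X Y C) (c : ℂ) :
    C.indicator (fun _ => c) ∈ LinearMap.range (TensorProduct.lift ((SB X).mulTensor (SB Y))) := by
  obtain ⟨A, B, hA, hAc, hAX, hB, hBc, hBY, rfl⟩ := hC
  refine ⟨c • ((⟨A.indicator 1, isSB_indicator_one hA hAc hAX⟩ : SB X) ⊗ₜ
    (⟨B.indicator 1, isSB_indicator_one hB hBc hBY⟩ : SB Y)), ?_⟩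
  ext ⟨x, y⟩
  rw [map_smul, TensorProduct.lift.tmul, Pi.smul_apply, Submodule.mulTensor_apply,
    ← Set.indicator_prod_one]
  exact Set.smul_indicator_one_apply (A ×ˢ B) c (x, y)

end IsCompactClopenBox

theorem exists_isCompactClopenBox_mem_subset [LocallyCompactSpace E] [T2Space E]
    [TotallyDisconnectedSpace E] [LocallyCompactSpace F] [T2Space F] [TotallyDisconnectedSpace F]
    {X : Set E} {Y : Set F} {U : Set (E × F)} (hU : IsOpen U) (hUXY : U ⊆ X ×ˢ Y)
    {z : E × F} (hz : z ∈ U) : ∃ C, IsCompactClopenBox X Y C ∧ z ∈ C ∧ C ⊆ U := by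
  obtain ⟨U₁, U₂, hU₁, hU₂, hz₁, hz₂, hU₁₂⟩ := isOpen_prod_iff.1 hU z.1 z.2 hz
  obtain ⟨A, hA, hAc, hzA, hAU⟩ := exists_isClopen_isCompact_mem_subset hU₁ hz₁
  obtain ⟨B, hB, hBc, hzB, hBU⟩ := exists_isClopen_isCompact_mem_subset hU₂ hz₂
  have hABU : A ×ˢ B ⊆ U := (Set.prod_mono hAU hBU).trans hU₁₂
  refine ⟨A ×ˢ B, ⟨A, B, hA, hAc, fun x hx => ?_, hB, hBc, fun y hy => ?_, rfl⟩,
    ⟨hzA, hzB⟩, hABU⟩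
  · exact (hUXY (hABU (Set.mk_mem_prod hx hzB))).1
  · exact (hUXY (hABU (Set.mk_mem_prod hzA hy))).2

theorem mem_range_lift_mulTensor_of_isSB [LocallyCompactSpace E] [T2Space E]
    [TotallyDisconnectedSpace E] [LocallyCompactSpace F] [T2Space F] [TotallyDisconnectedSpace F]
    {X : Set E} {Y : Set F} (hX : IsOpen X) (hY : IsOpen Y) {f : E × F → ℂ}
    (hf : IsSB (X ×ˢ Y) f) :
    f ∈ LinearMap.range (TensorProduct.lift ((SB X).mulTensor (SB Y))) := by
  let P : Set (E × F) → Prop := fun C => IsCompactClopenBox X Y C ∧ ∃ c, Set.EqOn f (fun _ => c) C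
  have hbox : ∀ z ∈ tsupport f, ∃ C, P C ∧ z ∈ C := fun z hz => by
    obtain ⟨C, hC, hzC, hCU⟩ := exists_isCompactClopenBox_mem_subset
      ((hf.1 {f z}).inter (hX.prod hY)) Set.inter_subset_right ⟨rfl, hf.2.2 hz⟩
    exact ⟨C, ⟨hC, f z, fun w hw => (hCU hw).1⟩, hzC⟩
  choose C hC hzC using hbox
  obtain ⟨t, ht⟩ := hf.2.1.elim_nhds_subcover' C
    fun z hz => (hC z hz).1.isOpen.mem_nhds (hzC z hz)
  have hf_eq : (⋃ z ∈ t, C z z.2).indicator f = f :=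
    Set.indicator_eq_self.2 (subset_tsupport f |>.trans ht)
  rw [← hf_eq]
  refine AddSubgroup.indicator_biUnion_mem (LinearMap.range _).toAddSubgroup f (P := P)
    (fun C D hC hD => ⟨hC.1.inter hD.1, hC.2.imp fun _ hc => hc.mono Set.inter_subset_left⟩)
    (fun C ⟨hC, c, hc⟩ => ?_) t (fun z => C z z.2) (fun z _ => hC z z.2)
  rw [Set.indicator_congr hc]
  exact hC.indicator_const_mem_range c

theorem bijective_lift_tensorBilin [LocallyCompactSpace E] [T2Space E]
    [TotallyDisconnectedSpace E] [LocallyCompactSpace F] [T2Space F] [TotallyDisconnectedSpace F]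
    {X : Set E} {Y : Set F} (hX : IsOpen X) (hY : IsOpen Y) :
    Function.Bijective (TensorProduct.lift (tensorBilin X Y)) := by
  have hcomp : (SB (X ×ˢ Y)).subtype ∘ₗ TensorProduct.lift (tensorBilin X Y) =
      TensorProduct.lift ((SB X).mulTensor (SB Y)) :=
    TensorProduct.ext' fun _ _ => rfl
  refine ⟨fun s t hst => (SB X).lift_mulTensor_injective (SB Y) ?_, fun g => ?_⟩
  · rw [← hcomp, LinearMap.comp_apply, LinearMap.comp_apply, hst]
  · obtain ⟨t, ht⟩ := mem_range_lift_mulTensor_of_isSB hX hY g.2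
    exact ⟨t, Subtype.ext (by rw [← ht, ← hcomp]; rfl)⟩

end SchwartzBruhat

theorem schwartz_kernel_converse_general (p m n : ℕ) [Fact p.Prime]
    (X : Set (Fin m → ℚ_[p])) (Y : Set (Fin n → ℚ_[p])) (hX : IsOpen X) (hY : IsOpen Y)
    (K : SB Y →ₗ[ℂ] Module.Dual ℂ (SB X)) :
    ∃! u : Module.Dual ℂ (SB (X ×ˢ Y)),
      ∀ (φ : SB X) (ψ : SB Y), u (tensorBilin X Y φ ψ) = K ψ φ :=
  exists_unique_dual_apply_eq_of_bijective_lift _ (bijective_lift_tensorBilin hX hY) K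

/-- p-adic Schwartz kernel theorem, converse direction: for every `ℂ`-linear map
`𝒦 : 𝒮(Y) → 𝒮'(X)` there is a unique distribution `u` on `X × Y` with
`⟨u, φ ⊗ ψ⟩ = ⟨𝒦ψ, φ⟩` for all `φ ∈ 𝒮(X)`, `ψ ∈ 𝒮(Y)`. -/
theorem schwartz_kernel_converse (p m n : ℕ) [Fact p.Prime] (hm : 0 < m) (hn : 0 < n)
    (X : Set (Fin m → ℚ_[p])) (Y : Set (Fin n → ℚ_[p])) (hX : IsOpen X) (hY : IsOpen Y)
    (K : SB Y →ₗ[ℂ] Module.Dual ℂ (SB X)) :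
    ∃! u : Module.Dual ℂ (SB (X ×ˢ Y)),
      ∀ (φ : SB X) (ψ : SB Y), u (tensorBilin X Y φ ψ) = K ψ φ :=
  schwartz_kernel_converse_general p m n X Y hX hY K
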